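/- With L_1, L_2, L_3, L_4 the explicit 2×2 matrices and GHZ states |Ψ_{i_1,…,i_n}⟩ = (1/√2)(|i_1⋯i_n⟩ + |ī_1⋯ī_n⟩) in (ℂ²)^{⊗n} (n ≥ 2), for L̃_k = I^{⊗(l-1)} ⊗ L_k ⊗ I^{⊗(n-l)}, one has ⟨L̃_k Ψ_{i_1,…,i_n}, L̃_{k'} Ψ_{i_1,…,i_n}⟩ = (1/4)δ_{kk'}. -/

import Mathlib

open Complex Matrix BigOperators

noncomputable def L : Fin 4 → Matrix (Fin 2) (Fin 2) ℂ :=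
  ![ (1/4 : ℂ) • !![2, 1 - I; 1 + I, 0],
     (1/4 : ℂ) • !![2, -1 + I; -1 - I, 0],
     (1/4 : ℂ) • !![0, 1 + I; 1 - I, 2],
     (1/4 : ℂ) • !![0, -1 - I; -1 + I, 2] ]

/-- Hermitian inner product, conjugate-linear in the first argument. -/
noncomputable def inn {ι : Type*} [Fintype ι] (x y : ι → ℂ) : ℂ :=
  ∑ i, starRingEnd ℂ (x i) * y i

/-- The GHZ state |Ψ_{i_1,…,i_n}⟩ = (1/√2)(|i_1⋯i_n⟩ + |ī_1⋯ī_n⟩)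
in coordinates on (ℂ²)^{⊗n}, where ī = i + 1 (mod 2). -/
noncomputable def GHZ {n : ℕ} (i : Fin n → Fin 2) : (Fin n → Fin 2) → ℂ :=
  fun f => (Real.sqrt 2 : ℂ)⁻¹ *
    ((if f = i then 1 else 0) + (if f = (fun u => i u + 1) then 1 else 0))

/-- L̃ = I^{⊗(l-1)} ⊗ M ⊗ I^{⊗(n-l)} acting on a vector of (ℂ²)^{⊗n}. -/
noncomputable def Ltil {n : ℕ} (l : Fin n) (M : Matrix (Fin 2) (Fin 2) ℂ)
    (x : (Fin n → Fin 2) → ℂ) : (Fin n → Fin 2) → ℂ :=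
  fun f => ∑ m, M (f l) m * x (Function.update f l m)

/-! `L̃_k` acts on site `l` only, so `⟨L̃_k Ψ, L̃_k' Ψ⟩ = ⟨Ψ, L̃(L_kᴴ L_k') Ψ⟩`: the adjoint and the
product are computed site-locally, by reindexing with the involution `(f, m) ↦ (f[l ↦ m], f l)`.
Since `n ≥ 2`, changing site `l` alone never turns `i` into its complement `ī`, so the two branches
of the GHZ state do not interfere and `⟨Ψ, L̃(P) Ψ⟩ = tr P / 2` (the reduced state at site `l` is
`I/2`). Finally `tr (L_kᴴ L_k') = δ_{kk'}/2` by direct computation. -/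

lemma Fin.two_add_one_ne (a : Fin 2) : a + 1 ≠ a := by
  fin_cases a <;> decide

lemma Fin.two_add_one_add_one (a : Fin 2) : a + 1 + 1 = a := by
  fin_cases a <;> rfl

lemma Fin.two_sum_add_one {M : Type*} [AddCommMonoid M] (f : Fin 2 → M) (a : Fin 2) :
    f a + f (a + 1) = ∑ b, f b := by
  fin_cases a <;> simp [Fin.sum_univ_two, add_comm]

lemma inv_sqrt_two_mul_self : (Real.sqrt 2 : ℂ)⁻¹ * (Real.sqrt 2 : ℂ)⁻¹ = 1 / 2 := by
  rw [← mul_inv, ← ofReal_mul, Real.mul_self_sqrt zero_le_two]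
  norm_num

section

variable {n : ℕ}

def swapAt (l : Fin n) : Equiv.Perm ((Fin n → Fin 2) × Fin 2) :=
  Function.Involutive.toPerm (fun p => (Function.update p.1 l p.2, p.1 l)) fun p => by simp

lemma swapAt_apply (l : Fin n) (p : (Fin n → Fin 2) × Fin 2) :
    swapAt l p = (Function.update p.1 l p.2, p.1 l) := rfl

lemma inn_Ltil_left (l : Fin n) (M : Matrix (Fin 2) (Fin 2) ℂ) (x y : (Fin n → Fin 2) → ℂ) :
    inn (Ltil l M x) y = inn x (Ltil l Mᴴ y) := by
  simp only [inn, Ltil, map_sum, _root_.map_mul, Finset.sum_mul, Finset.mul_sum]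
  rw [← Fintype.sum_prod_type', ← Fintype.sum_prod_type']
  refine Fintype.sum_equiv (swapAt l) _ _ fun ⟨f, m⟩ => ?_
  simp only [swapAt_apply, Function.update_self,
    Function.update_idem, Function.update_eq_self, conjTranspose_apply, RCLike.star_def]
  ring

lemma Ltil_Ltil (l : Fin n) (M N : Matrix (Fin 2) (Fin 2) ℂ) (x : (Fin n → Fin 2) → ℂ) :
    Ltil l M (Ltil l N x) = Ltil l (M * N) x := by
  ext f
  simp only [Ltil, Function.update_self, Function.update_idem, mul_apply, Finset.mul_sum,
    Finset.sum_mul, mul_assoc]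
  exact Finset.sum_comm

lemma inn_Ltil_Ltil (l : Fin n) (M N : Matrix (Fin 2) (Fin 2) ℂ) (x y : (Fin n → Fin 2) → ℂ) :
    inn (Ltil l M x) (Ltil l N y) = inn x (Ltil l (Mᴴ * N) y) := by
  rw [inn_Ltil_left, Ltil_Ltil]

lemma GHZ_flip (i : Fin n → Fin 2) : GHZ (fun u => i u + 1) = GHZ i := by
  ext f
  simp only [GHZ, Fin.two_add_one_add_one]
  rw [add_comm (ite _ _ _)]

lemma update_ne_flip {l j : Fin n} (hj : j ≠ l) (i : Fin n → Fin 2) (m : Fin 2) :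
    Function.update i l m ≠ fun u => i u + 1 := fun h =>
  Fin.two_add_one_ne (i j) (by simpa [Function.update_of_ne hj] using (congrFun h j).symm)

lemma inn_GHZ_left (hn : n ≠ 0) (i : Fin n → Fin 2) (v : (Fin n → Fin 2) → ℂ) :
    inn (GHZ i) v = (Real.sqrt 2 : ℂ)⁻¹ * (v i + v fun u => i u + 1) := by
  have hi : i ≠ fun u => i u + 1 := fun h =>
    Fin.two_add_one_ne (i ⟨0, Nat.pos_of_ne_zero hn⟩) (congrFun h _).symm
  simp only [inn, GHZ, map_mul, map_inv₀, conj_ofReal, map_add, apply_ite (starRingEnd ℂ),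
    map_one, map_zero, mul_assoc, ← Finset.mul_sum, add_mul, ite_mul, one_mul, zero_mul,
    Finset.sum_add_distrib, Finset.sum_ite_eq', Finset.mem_univ, if_true]

lemma Ltil_GHZ_apply_self (hn : 2 ≤ n) (l : Fin n) (i : Fin n → Fin 2)
    (P : Matrix (Fin 2) (Fin 2) ℂ) :
    Ltil l P (GHZ i) i = (Real.sqrt 2 : ℂ)⁻¹ * P (i l) (i l) := by
  obtain ⟨j, hj⟩ := @exists_ne _ (Fin.nontrivial_iff_two_le.mpr hn) l
  simp [Ltil, GHZ, update_ne_flip hj, Function.update_eq_self_iff, mul_comm]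

lemma inn_GHZ_Ltil (hn : 2 ≤ n) (l : Fin n) (i : Fin n → Fin 2)
    (P : Matrix (Fin 2) (Fin 2) ℂ) :
    inn (GHZ i) (Ltil l P (GHZ i)) = P.trace / 2 := by
  have hflip := Ltil_GHZ_apply_self hn l (fun u => i u + 1) P
  rw [GHZ_flip] at hflip
  rw [inn_GHZ_left (by omega), Ltil_GHZ_apply_self hn, hflip, ← mul_add, ← mul_assoc,
    inv_sqrt_two_mul_self, Fin.two_sum_add_one (fun a => P a a), trace]
  simp only [diag_apply]
  ring

lemma trace_conjTranspose_L_mul_L (k k' : Fin 4) :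
    ((L k)ᴴ * L k').trace = if k = k' then 1 / 2 else 0 := by
  fin_cases k <;> fin_cases k' <;>
    norm_num [L, trace, Fin.sum_univ_two, mul_apply, Complex.ext_iff]

end

theorem GHZ_Ltil_inner (n : ℕ) (hn : 2 ≤ n) (l : Fin n)
    (i : Fin n → Fin 2) (k k' : Fin 4) :
    inn (Ltil l (L k) (GHZ i)) (Ltil l (L k') (GHZ i))
      = if k = k' then (1/4 : ℂ) else 0 := by
  rw [inn_Ltil_Ltil, inn_GHZ_Ltil hn, trace_conjTranspose_L_mul_L]
  split_ifs <;> norm_num
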